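/- arXiv:1105.1248 — 3 statements merged into one kernel-verified Lean document; each statement's English description precedes it below -/
import Mathlib

section
/- Let G = (F ∪ C, E) be a finite bipartite graph with F nonempty, and let I ⊆ F be a random independent set in the facility graph G_F obtained by selecting each facility i whenever its i.i.d. uniform random value exceeds those of all its G_F-neighbors. Let X = Σ_{i ∈ I} deg(i) be the number of clients removed (each client adjacent to a selected facility is counted once, which is well-defined since I is independent in G_F). Then E[X] = Σ_{i ∈ F} deg(i)/(deg_F(i)+1) ≥ |E|/|F|. -/
open MeasureTheory ProbabilityTheory Finset
open scoped Classical ENNReal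

/-- `i'` is a neighbor of `i` in the facility graph `G_F`. -/
def facNbr {F C : Type*} (A : F → C → Prop) (i i' : F) : Prop :=
  i' ≠ i ∧ ∃ j, A i j ∧ A i' j

/-- Degree of facility `i` in the facility graph `G_F`. -/
noncomputable def degGF {F C : Type*} [Fintype F] (A : F → C → Prop) (i : F) : ℕ :=
  (Finset.univ.filter (fun i' => facNbr A i i')).card

/-- Degree of facility `i` in the bipartite graph `G`. -/
noncomputable def degFac {F C : Type*} [Fintype C] (A : F → C → Prop) (i : F) : ℕ :=
  (Finset.univ.filter (fun j => A i j)).card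

/-- Facility `i` is selected in outcome `ω` iff its random value strictly exceeds
those of all its `G_F`-neighbors. -/
def selected {F C Ω : Type*} (A : F → C → Prop) (r : F → Ω → ℝ) (i : F) (ω : Ω) : Prop :=
  ∀ i', facNbr A i i' → r i' ω < r i ω

/-!
Facility `i` is selected exactly when its value is the strict maximum among the values on its
closed neighbourhood in `G_F`, a set of `deg_F(i) + 1` facilities. Those values are i.i.d., so
by exchangeability each of them is the strict maximum with the same probability, and since the
values are almost surely distinct, exactly one of them is; hence `i` is selected with
probability `1 / (deg_F(i) + 1)`, and linearity of expectation gives `E[X]`. The bound follows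
from `deg_F(i) + 1 ≤ |F|`.
-/

def strictMaxSet {ι : Type*} (k : ι) : Set (ι → ℝ) := {x | ∀ j, j ≠ k → x j < x k}

section StrictMax

variable {ι : Type*}

lemma measurableSet_strictMaxSet [Countable ι] (k : ι) : MeasurableSet (strictMaxSet k) := by
  simp only [strictMaxSet, Set.ofPred_forall]
  exact .iInter fun j => .iInter fun _ =>
    measurableSet_lt (measurable_pi_apply j) (measurable_pi_apply k)

lemma pairwise_disjoint_strictMaxSet :
    Pairwise (Function.onFun Disjoint (strictMaxSet (ι := ι))) :=
  fun a b hab => Set.disjoint_left.mpr fun _ ha hb => lt_asymm (ha b hab.symm) (hb a hab)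

lemma exists_mem_strictMaxSet [Finite ι] [Nonempty ι] {x : ι → ℝ} (hx : x.Injective) :
    ∃ k, x ∈ strictMaxSet k := by
  obtain ⟨k, hk⟩ := Finite.exists_max x
  exact ⟨k, fun j hj => (hk j).lt_of_ne (hx.ne hj)⟩

lemma piCongrLeft_swap_preimage_strictMaxSet (k k' : ι) :
    MeasurableEquiv.piCongrLeft (fun _ => ℝ) (Equiv.swap k k') ⁻¹' strictMaxSet k
      = strictMaxSet k' := by
  have hswap : ∀ (x : ι → ℝ) i,
      MeasurableEquiv.piCongrLeft (fun _ => ℝ) (Equiv.swap k k') x i = x (Equiv.swap k k' i) := by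
    intro x i
    simp [MeasurableEquiv.coe_piCongrLeft, Equiv.piCongrLeft_apply_eq_cast]
  ext x
  simp only [strictMaxSet, Set.mem_preimage, Set.mem_ofPred_eq, hswap, Equiv.swap_apply_left]
  rw [← (Equiv.swap k k').forall_congr_right]
  simp [Equiv.swap_apply_eq_iff]

lemma pi_strictMaxSet_eq [Fintype ι] (ν : Measure ℝ) [SigmaFinite ν] (k k' : ι) :
    Measure.pi (fun _ => ν) (strictMaxSet k) = Measure.pi (fun _ => ν) (strictMaxSet k') := by
  rw [← piCongrLeft_swap_preimage_strictMaxSet k k',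
    (measurePreserving_piCongrLeft (fun _ => ν) (Equiv.swap k k')).measure_preimage
      (measurableSet_strictMaxSet k).nullMeasurableSet]

variable {Ω : Type*} [MeasurableSpace Ω] {μ : Measure Ω} [IsProbabilityMeasure μ]
  {f : ι → Ω → ℝ}

lemma sum_measure_preimage_strictMaxSet [Fintype ι] [Nonempty ι] (hf : ∀ j, Measurable (f j))
    (hdist : ∀ j j', j ≠ j' → μ {ω | f j ω = f j' ω} = 0) :
    ∑ k, μ ((fun ω j => f j ω) ⁻¹' strictMaxSet k) = 1 := by
  have hmeas : ∀ k, MeasurableSet ((fun ω j => f j ω) ⁻¹' strictMaxSet k) := fun k =>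
    measurable_pi_lambda _ hf (measurableSet_strictMaxSet k)
  have hcover : μ (⋃ k, (fun ω j => f j ω) ⁻¹' strictMaxSet k)ᶜ = 0 := by
    refine measure_mono_null ?_ (measure_iUnion_null fun j => measure_iUnion_null fun j' =>
      measure_iUnion_null (hdist j j'))
    intro ω hω
    by_contra hinj
    simp only [Set.mem_iUnion, Set.mem_ofPred_eq, not_exists] at hinj
    obtain ⟨k, hk⟩ := exists_mem_strictMaxSet (x := fun j => f j ω) fun j j' h =>
      by_contra fun hne => hinj j j' hne h
    exact hω (Set.mem_iUnion.mpr ⟨k, hk⟩)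
  have hdisj :
      Pairwise (Function.onFun Disjoint fun k => (fun ω j => f j ω) ⁻¹' strictMaxSet k) :=
    fun a b hab => (pairwise_disjoint_strictMaxSet hab).preimage _
  rw [← (prob_compl_eq_zero_iff (.iUnion hmeas)).mp hcover, measure_iUnion hdisj hmeas,
    tsum_fintype]

lemma measure_preimage_strictMaxSet_eq_inv_card [Fintype ι] (hf : ∀ j, Measurable (f j))
    (hindep : iIndepFun f μ) (ν : Measure ℝ) (hident : ∀ j, μ.map (f j) = ν)
    (hdist : ∀ j j', j ≠ j' → μ {ω | f j ω = f j' ω} = 0) (k : ι) :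
    μ ((fun ω j => f j ω) ⁻¹' strictMaxSet k) = (Fintype.card ι : ℝ≥0∞)⁻¹ := by
  have : Nonempty ι := ⟨k⟩
  have : IsProbabilityMeasure ν := hident k ▸ Measure.isProbabilityMeasure_map (hf k).aemeasurable
  have hpi : μ.map (fun ω j => f j ω) = Measure.pi (fun _ => ν) := by
    rw [← funext hident]
    exact (iIndepFun_iff_map_fun_eq_pi_map fun j => (hf j).aemeasurable).mp hindep
  have hsym : ∀ k', μ ((fun ω j => f j ω) ⁻¹' strictMaxSet k')
      = μ ((fun ω j => f j ω) ⁻¹' strictMaxSet k) := by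
    intro k'
    simp only [← Measure.map_apply (measurable_pi_lambda _ hf) (measurableSet_strictMaxSet _),
      hpi, pi_strictMaxSet_eq ν k' k]
  have hsum := sum_measure_preimage_strictMaxSet hf hdist
  simp only [hsym, Finset.sum_const, Finset.card_univ, nsmul_eq_mul] at hsum
  exact ENNReal.eq_inv_of_mul_eq_one_left (by rwa [mul_comm] at hsum)

end StrictMax

section Facility

variable {F C Ω : Type*} [Fintype F] (A : F → C → Prop)

noncomputable def closedNbhd (i : F) : Finset F := insert i (univ.filter (facNbr A i))

lemma mem_closedNbhd_self (i : F) : i ∈ closedNbhd A i := mem_insert_self _ _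

lemma card_closedNbhd (i : F) : #(closedNbhd A i) = degGF A i + 1 :=
  card_insert_of_notMem fun hi => (mem_filter.mp hi).2.1 rfl

lemma degGF_add_one_le_card (i : F) : degGF A i + 1 ≤ Fintype.card F :=
  card_closedNbhd A i ▸ card_le_univ _

lemma selected_iff_mem_strictMaxSet (r : F → Ω → ℝ) (i : F) (ω : Ω) :
    selected A r i ω ↔
      (fun j : closedNbhd A i => r j ω) ∈ strictMaxSet ⟨i, mem_closedNbhd_self A i⟩ := by
  simp only [selected, strictMaxSet, Subtype.forall, ne_eq, closedNbhd, mem_insert, mem_filter,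
    mem_univ, true_and]
  exact forall_congr' fun j =>
    ⟨fun h hj hne => h (hj.resolve_left fun hji => hne (Subtype.ext hji)),
      fun h hnbr => h (.inr hnbr) fun hji => hnbr.1 (congrArg Subtype.val hji)⟩

variable [MeasurableSpace Ω] {μ : Measure Ω} [IsProbabilityMeasure μ] {r : F → Ω → ℝ}

lemma measurableSet_selected (hr : ∀ i, Measurable (r i)) (i : F) :
    MeasurableSet {ω | selected A r i ω} := by
  simp only [selected, Set.ofPred_forall]
  exact .iInter fun i' => .iInter fun _ => measurableSet_lt (hr i') (hr i)

lemma measure_selected (hr : ∀ i, Measurable (r i)) (hindep : iIndepFun r μ) (ν : Measure ℝ)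
    (hident : ∀ i, μ.map (r i) = ν) (hdist : ∀ i i', i ≠ i' → μ {ω | r i ω = r i' ω} = 0)
    (i : F) : μ {ω | selected A r i ω} = ((degGF A i + 1 : ℕ) : ℝ≥0∞)⁻¹ := by
  have hsel : {ω | selected A r i ω}
      = (fun ω (j : closedNbhd A i) => r j ω) ⁻¹' strictMaxSet ⟨i, mem_closedNbhd_self A i⟩ :=
    Set.ext (selected_iff_mem_strictMaxSet A r i)
  rw [hsel, measure_preimage_strictMaxSet_eq_inv_card (f := fun j : closedNbhd A i => r j)
    (fun j => hr j) (hindep.precomp (g := Subtype.val) Subtype.val_injective) ν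
    (fun j => hident j) (fun j j' hne => hdist j j' (Subtype.val_injective.ne hne)),
    Fintype.card_coe, card_closedNbhd]

lemma integral_sum_ite_selected (hr : ∀ i, Measurable (r i)) (hindep : iIndepFun r μ)
    (ν : Measure ℝ) (hident : ∀ i, μ.map (r i) = ν)
    (hdist : ∀ i i', i ≠ i' → μ {ω | r i ω = r i' ω} = 0) (w : F → ℝ) :
    ∫ ω, (∑ i, if selected A r i ω then w i else 0) ∂μ = ∑ i, w i / (degGF A i + 1) := by
  have hind : ∀ i, (fun ω => if selected A r i ω then w i else 0)
      = {ω | selected A r i ω}.indicator fun _ => w i := fun i => rfl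
  rw [integral_finsetSum _ fun i _ =>
    hind i ▸ (integrable_const _).indicator (measurableSet_selected A hr i)]
  refine sum_congr rfl fun i _ => ?_
  rw [hind i, integral_indicator_const _ (measurableSet_selected A hr i), measureReal_def,
    measure_selected A hr hindep ν hident hdist i, ENNReal.toReal_inv, ENNReal.toReal_natCast,
    smul_eq_mul, inv_mul_eq_div, Nat.cast_succ]

end Facility

theorem expected_removed_clients_general {F C Ω : Type*} [Fintype F] [Fintype C]
    [MeasurableSpace Ω] (μ : Measure Ω) [IsProbabilityMeasure μ]
    (A : F → C → Prop) (r : F → Ω → ℝ)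
    (hmeas : ∀ i, Measurable (r i))
    (hindep : iIndepFun r μ)
    (hunif : ∀ i, μ.map (r i) = volume.restrict (Set.Icc (0 : ℝ) 1))
    (hdistinct : ∀ i i' : F, i ≠ i' → μ {ω | r i ω = r i' ω} = 0) :
    (∫ ω, (∑ i : F, if selected A r i ω then (degFac A i : ℝ) else 0) ∂μ)
        = ∑ i : F, (degFac A i : ℝ) / (degGF A i + 1) ∧
      (∑ i : F, (degFac A i : ℝ)) / (Fintype.card F)
        ≤ ∑ i : F, (degFac A i : ℝ) / (degGF A i + 1) := by
  refine ⟨integral_sum_ite_selected A hmeas hindep _ hunif hdistinct _, ?_⟩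
  rw [sum_div]
  gcongr with i
  exact_mod_cast degGF_add_one_le_card A i

/-- The expected number `E[X]` of clients removed in one iteration (where
`X = Σ_{i ∈ I} deg(i)` for the random independent set `I` chosen by the
max-random-value rule) equals `Σ_{i ∈ F} deg(i)/(deg_F(i)+1)`, which is at least
`|E|/|F|`. -/
theorem expected_removed_clients {F C Ω : Type*} [Fintype F] [Fintype C] [Nonempty F]
    [MeasurableSpace Ω] (μ : Measure Ω) [IsProbabilityMeasure μ]
    (A : F → C → Prop) (r : F → Ω → ℝ)
    (hmeas : ∀ i, Measurable (r i))
    (hindep : iIndepFun r μ)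
    (hunif : ∀ i, μ.map (r i) = volume.restrict (Set.Icc (0 : ℝ) 1))
    (hdistinct : ∀ i i' : F, i ≠ i' → μ {ω | r i ω = r i' ω} = 0) :
    (∫ ω, (∑ i : F, if selected A r i ω then (degFac A i : ℝ) else 0) ∂μ)
        = ∑ i : F, (degFac A i : ℝ) / (degGF A i + 1) ∧
      (∑ i : F, (degFac A i : ℝ)) / (Fintype.card F)
        ≤ ∑ i : F, (degFac A i : ℝ) / (degGF A i + 1) :=
  expected_removed_clients_general μ A r hmeas hindep hunif hdistinct
end

section
/- Fix ε > 0, k ∈ ℕ, and nonnegative reals c_{i1}, …, c_{ik}, f_i. Let α be an optimal solution of FacRev-Jain and α' an optimal solution of FacRev-Dist (the ε-relaxed program with constraints α'_j ≤ (1+ε)(α'_l + c_{ij} + c_{il}) and Σ_{l=j}^{k} max(α'_j − (1+ε)c_{il}, 0) ≤ (1+ε)f_i). Then α'_j ≤ (1+ε)²·α_j for every j ∈ {1, …, k}. -/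
open Finset

/-- Feasibility for the factor-revealing LP `FacRev-Jain`. -/
def JainFeasible {k : ℕ} (c : Fin k → ℝ) (f : ℝ) (α : Fin k → ℝ) : Prop :=
  (∀ j, 0 ≤ α j) ∧ Monotone α ∧
  (∀ j l, α j ≤ α l + c j + c l) ∧
  (∀ j, ∑ l ∈ Finset.univ.filter (fun l => j ≤ l), max (α j - c l) 0 ≤ f)

/-- Feasibility for the relaxed factor-revealing LP `FacRev-Dist`. -/
def DistFeasible (ε : ℝ) {k : ℕ} (c : Fin k → ℝ) (f : ℝ) (α : Fin k → ℝ) : Prop :=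
  (∀ j, 0 ≤ α j) ∧ Monotone α ∧
  (∀ j l, α j ≤ (1 + ε) * (α l + c j + c l)) ∧
  (∀ j, ∑ l ∈ Finset.univ.filter (fun l => j ≤ l), max (α j - (1 + ε) * c l) 0
      ≤ (1 + ε) * f)

/-- Proposition 2: for optimal solutions `α` of `FacRev-Jain` and `α'` of
`FacRev-Dist` (same parameters `c, f`), we have `α'_j ≤ (1+ε)²·α_j` for all `j`. -/
theorem dist_optimal_le_jain_optimal {k : ℕ} (ε : ℝ) (hε : 0 < ε)
    (c : Fin k → ℝ) (f : ℝ) (hc : ∀ j, 0 ≤ c j) (hf : 0 ≤ f)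
    (α α' : Fin k → ℝ)
    (hα : JainFeasible c f α)
    (hαopt : ∀ β : Fin k → ℝ, JainFeasible c f β → ∑ j, β j ≤ ∑ j, α j)
    (hα' : DistFeasible ε c f α')
    (hα'opt : ∀ β : Fin k → ℝ, DistFeasible ε c f β → ∑ j, β j ≤ ∑ j, α' j) :
    ∀ j, α' j ≤ (1 + ε) ^ 2 * α j := by
  obtain ⟨ha0, hamono, hatri, hapay⟩ := hα
  obtain ⟨hb0, hbmono, hbtri, hbpay⟩ := hα'
  have hε1 : (0:ℝ) < 1 + ε := by linarith
  have hε1' : (1:ℝ) ≤ 1 + ε := by linarith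
  intro j
  have hne : Nonempty (Fin k) := ⟨j⟩
  -- μ p = min (α' p) (min over l of α' l + c p + c l)
  set μ : Fin k → ℝ := fun p =>
    min (α' p) (Finset.univ.inf' Finset.univ_nonempty (fun l => α' l + c p + c l)) with hμdef
  set S : Fin k → Finset (Fin k) := fun m => Finset.univ.filter (fun p => m ≤ p) with hSdef
  have hSne : ∀ m, (S m).Nonempty := fun m => ⟨m, by simp [hSdef]⟩
  have hSmem : ∀ m p, p ∈ S m ↔ m ≤ p := by intro m p; simp [hSdef]
  set ν : Fin k → ℝ := fun m => (S m).inf' (hSne m) μ with hνdef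
  have hμ_le : ∀ p, μ p ≤ α' p := fun p => min_le_left _ _
  have hμ_lb : ∀ p l, μ p ≤ α' l + c p + c l := fun p l =>
    le_trans (min_le_right _ _) (Finset.inf'_le _ (Finset.mem_univ l))
  have hμ_ge : ∀ p, α' p / (1 + ε) ≤ μ p := by
    intro p
    refine le_min (by
      rw [div_le_iff₀ hε1]
      nlinarith [hb0 p]) ?_
    refine Finset.le_inf' _ _ (fun l _ => ?_)
    rw [div_le_iff₀ hε1]
    have := hbtri p l
    nlinarith
  have hν_le_μ : ∀ m, ν m ≤ μ m := fun m =>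
    Finset.inf'_le _ ((hSmem m m).mpr le_rfl)
  have hν_lb : ∀ m, α' m / (1 + ε) ≤ ν m := by
    intro m
    refine Finset.le_inf' _ _ (fun p hp => ?_)
    have hmp : m ≤ p := (hSmem m p).mp hp
    refine le_trans ?_ (hμ_ge p)
    have := hbmono hmp
    gcongr
  have hν0 : ∀ m, 0 ≤ ν m := fun m =>
    le_trans (div_nonneg (hb0 m) hε1.le) (hν_lb m)
  have hνmono : Monotone ν := by
    intro m m' h
    refine Finset.le_inf' _ _ (fun p hp => ?_)
    exact Finset.inf'_le _ ((hSmem m p).mpr (h.trans ((hSmem m' p).mp hp)))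
  have hνtri : ∀ m l, ν m ≤ ν l + c m + c l := by
    intro m l
    obtain ⟨q, hq, hqe⟩ := Finset.exists_mem_eq_inf' (hSne l) μ
    have hlq : l ≤ q := (hSmem l q).mp hq
    rcases le_total (α' q)
        (Finset.univ.inf' Finset.univ_nonempty (fun l' => α' l' + c q + c l')) with hcase | hcase
    · have hνl : ν l = α' q := by
        have h0 : ν l = μ q := hqe
        rw [h0]; exact min_eq_left hcase
      have h1 : ν m ≤ α' l + c m + c l := le_trans (hν_le_μ m) (hμ_lb m l)
      have h2 : α' l ≤ α' q := hbmono hlq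
      linarith
    · obtain ⟨p, _, hpe⟩ :=
        Finset.exists_mem_eq_inf' (Finset.univ_nonempty (α := Fin k))
          (fun l' => α' l' + c q + c l')
      have hνl : ν l = α' p + c q + c p := by
        have h0 : ν l = μ q := hqe
        rw [h0]
        have h1 : μ q = Finset.univ.inf' Finset.univ_nonempty (fun l' => α' l' + c q + c l') :=
          min_eq_right hcase
        rw [h1, hpe]
      have h1 : ν m ≤ α' p + c m + c p := le_trans (hν_le_μ m) (hμ_lb m p)
      have := hc q; have := hc l
      linarith
  set β : Fin k → ℝ := fun m => ν m / (1 + ε) with hβdef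
  have hβfeas : JainFeasible c f β := by
    refine ⟨fun m => div_nonneg (hν0 m) hε1.le, ?_, ?_, ?_⟩
    · intro m m' h
      have := hνmono h
      simp only [hβdef]
      gcongr
    · intro m l
      simp only [hβdef]
      rw [div_le_iff₀ hε1]
      have h1 := hνtri m l
      have h2 : ν l / (1 + ε) * (1 + ε) = ν l := div_mul_cancel₀ _ hε1.ne'
      nlinarith [mul_nonneg hε.le (hc m), mul_nonneg hε.le (hc l)]
    · intro m
      have hβm : β m ≤ α' m / (1 + ε) := by
        simp only [hβdef]
        gcongr
        exact le_trans (hν_le_μ m) (hμ_le m)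
      have key : ∀ l, max (β m - c l) 0 ≤ max (α' m - (1 + ε) * c l) 0 / (1 + ε) := by
        intro l
        rcases le_total (β m - c l) 0 with h | h
        · rw [max_eq_right h]
          exact div_nonneg (le_max_right _ _) hε1.le
        · rw [max_eq_left h]
          have h1 : β m - c l ≤ (α' m - (1 + ε) * c l) / (1 + ε) := by
            have heq : (α' m - (1 + ε) * c l) / (1 + ε) = α' m / (1 + ε) - c l := by
              field_simp
            rw [heq]
            linarith [hβm]
          exact le_trans h1 (by gcongr; exact le_max_left _ _)
      calc ∑ l ∈ Finset.univ.filter (fun l => m ≤ l), max (β m - c l) 0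
          ≤ ∑ l ∈ Finset.univ.filter (fun l => m ≤ l),
              max (α' m - (1 + ε) * c l) 0 / (1 + ε) :=
            Finset.sum_le_sum (fun l _ => key l)
        _ = (∑ l ∈ Finset.univ.filter (fun l => m ≤ l),
              max (α' m - (1 + ε) * c l) 0) / (1 + ε) := by rw [← Finset.sum_div]
        _ ≤ ((1 + ε) * f) / (1 + ε) := by gcongr; exact hbpay m
        _ = f := mul_div_cancel_left₀ f hε1.ne'
  set δ : Fin k → ℝ := fun m => max (α m) (β m) with hδdef
  obtain ⟨hβ0, hβmono, hβtri, hβpay⟩ := hβfeas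
  have hδfeas : JainFeasible c f δ := by
    refine ⟨fun m => le_trans (ha0 m) (le_max_left _ _),
      fun m m' h => max_le_max (hamono h) (hβmono h), ?_, ?_⟩
    · intro m l
      have h1 := hatri m l
      have h2 := hβtri m l
      have h3 : α l ≤ δ l := le_max_left _ _
      have h4 : β l ≤ δ l := le_max_right _ _
      simp only [hδdef]
      exact max_le (by linarith) (by linarith)
    · intro m
      rcases max_choice (α m) (β m) with h | h
      · have : δ m = α m := h
        simpa only [this] using hapay m
      · have : δ m = β m := h
        simpa only [this] using hβpay m
  have hsum : ∑ i, δ i ≤ ∑ i, α i := hαopt δ hδfeas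
  have hsum2 : ∑ i, α i ≤ ∑ i, δ i :=
    Finset.sum_le_sum (fun i _ => le_max_left _ _)
  have heq : ∑ i, α i = ∑ i, δ i := le_antisymm hsum2 hsum
  have hpt : δ j = α j := by
    have := (Finset.sum_eq_sum_iff_of_le (fun i _ => (le_max_left (α i) (β i) : α i ≤ δ i))).mp heq
    exact (this j (Finset.mem_univ j)).symm
  have hβj : β j ≤ α j := by
    rw [← hpt]; exact le_max_right _ _
  -- α' j / (1+ε) ≤ ν j and ν j / (1+ε) = β j ≤ α j
  have h1 : α' j ≤ (1 + ε) * ν j := by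
    have := hν_lb j
    rw [div_le_iff₀ hε1] at this
    linarith
  have h2 : ν j ≤ (1 + ε) * α j := by
    have : ν j / (1 + ε) ≤ α j := hβj
    rw [div_le_iff₀ hε1] at this
    linarith
  nlinarith [mul_le_mul_of_nonneg_left h2 hε1.le]
end

section
/- Fix ε > 0 and suppose that every feasible solution of FacRev-Jain with parameters c, f_i has objective ratio (Σ_{j=1}^k α_j)/(f_i + Σ_{j=1}^k c_{ij}) at most 1.861. Then every feasible optimal solution of FacRev-Dist with the same parameters has objective ratio at most (1+ε)²·1.861. -/
open Finset

/-- If every feasible solution of `FacRev-Jain` has objective ratio at most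
`1.861`, then every optimal solution of `FacRev-Dist` (same parameters) has
objective ratio at most `(1+ε)²·1.861`. -/
theorem dist_ratio_bound {k : ℕ} (ε : ℝ) (hε : 0 < ε)
    (c : Fin k → ℝ) (f : ℝ) (hc : ∀ j, 0 ≤ c j) (hf : 0 ≤ f)
    (hden : 0 < f + ∑ j, c j)
    (hJain : ∀ α : Fin k → ℝ, JainFeasible c f α →
      (∑ j, α j) / (f + ∑ j, c j) ≤ 1.861) :
    ∀ α' : Fin k → ℝ, DistFeasible ε c f α' →
      (∀ β : Fin k → ℝ, DistFeasible ε c f β → ∑ j, β j ≤ ∑ j, α' j) →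
      (∑ j, α' j) / (f + ∑ j, c j) ≤ (1 + ε) ^ 2 * 1.861 := by
  intro α' hα' _hopt
  obtain ⟨h0, hmono, h1, h2⟩ := hα'
  have hE : (0:ℝ) < 1 + ε := by linarith
  have hE1 : (1:ℝ) ≤ 1 + ε := by linarith
  rcases Nat.eq_zero_or_pos k with rfl | hk
  · simp only [Finset.univ_eq_empty, Finset.sum_empty, zero_div]
    positivity
  have hne : (Finset.univ : Finset (Fin k)).Nonempty := ⟨⟨0, hk⟩, Finset.mem_univ _⟩
  have hdiv : ∀ {a b : ℝ}, a ≤ b → a / (1 + ε) ≤ b / (1 + ε) := by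
    intro a b h; gcongr
  -- the minimum m' = min_l (α' l + c l)
  set m : ℝ := Finset.univ.inf' hne (fun l => α' l + c l) with hm
  have hm_le : ∀ l, m ≤ α' l + c l := fun l => Finset.inf'_le _ (Finset.mem_univ l)
  have hm_nonneg : 0 ≤ m := by
    apply Finset.le_inf'
    intro l _
    have := h0 l; have := hc l; linarith
  -- key upper bound: α' i ≤ (1+ε) * (m + c i)
  have hkey : ∀ i, α' i ≤ (1 + ε) * (m + c i) := by
    intro i
    obtain ⟨l, _, hl⟩ := Finset.exists_mem_eq_inf' hne (fun l => α' l + c l)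
    rw [← hm] at hl
    calc α' i ≤ (1 + ε) * (α' l + c i + c l) := h1 i l
      _ = (1 + ε) * (m + c i) := by rw [hl]; ring
  -- the auxiliary function g
  set g : Fin k → ℝ := fun i => min (α' i) (m + c i) / (1 + ε) with hg
  have hg_nonneg : ∀ i, 0 ≤ g i := by
    intro i
    apply div_nonneg _ (le_of_lt hE)
    exact le_min (h0 i) (by have := hc i; linarith)
  have hg_le1 : ∀ i, g i ≤ α' i / (1 + ε) :=
    fun i => hdiv (min_le_left _ _)
  have hg_le2 : ∀ i, g i ≤ (m + c i) / (1 + ε) :=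
    fun i => hdiv (min_le_right _ _)
  -- lower bound: for i ≥ j, α' j / (1+ε)^2 ≤ g i
  have hg_lb : ∀ j i, j ≤ i → α' j / (1 + ε) ^ 2 ≤ g i := by
    intro j i hji
    have h1' : α' j / (1 + ε) ≤ α' i := by
      have : α' j ≤ α' i := hmono hji
      have : α' j / (1 + ε) ≤ α' j := by
        rw [div_le_iff₀ hE]
        nlinarith [h0 j]
      linarith [hmono hji]
    have h2' : α' j / (1 + ε) ≤ m + c i := by
      rw [div_le_iff₀ hE]
      have := hkey i
      have := hmono hji
      nlinarith
    have : α' j / (1 + ε) ≤ min (α' i) (m + c i) := le_min h1' h2'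
    calc α' j / (1 + ε) ^ 2 = (α' j / (1 + ε)) / (1 + ε) := by
          rw [div_div]; ring_nf
      _ ≤ min (α' i) (m + c i) / (1 + ε) := hdiv this
  -- the Jain-feasible solution α
  set α : Fin k → ℝ := fun j => Finset.univ.inf' hne (fun i => g (j ⊔ i)) with hαdef
  have hα_le : ∀ j i, α j ≤ g (j ⊔ i) := fun j i => Finset.inf'_le _ (Finset.mem_univ i)
  have hα_le_g : ∀ j, α j ≤ g j := by
    intro j
    have := hα_le j j
    simpa using this
  have hα_lb : ∀ j, α' j / (1 + ε) ^ 2 ≤ α j := by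
    intro j
    apply Finset.le_inf'
    intro i _
    exact hg_lb j (j ⊔ i) le_sup_left
  have hα_nonneg : ∀ j, 0 ≤ α j := by
    intro j
    apply Finset.le_inf'
    intro i _
    exact hg_nonneg _
  have hα_mono : Monotone α := by
    intro j j' hjj'
    apply Finset.le_inf'
    intro i _
    have : j ⊔ (j' ⊔ i) = j' ⊔ i := by
      rw [sup_eq_right]
      exact le_trans hjj' le_sup_left
    calc α j ≤ g (j ⊔ (j' ⊔ i)) := hα_le j (j' ⊔ i)
      _ = g (j' ⊔ i) := by rw [this]
  -- constraint 1 for α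
  have hα_c1 : ∀ j l, α j ≤ α l + c j + c l := by
    intro j l
    obtain ⟨i, _, hi⟩ := Finset.exists_mem_eq_inf' hne (fun i => g (l ⊔ i))
    have hαl : α l = g (l ⊔ i) := hi
    have hli : l ≤ l ⊔ i := le_sup_left
    rcases min_cases (α' (l ⊔ i)) (m + c (l ⊔ i)) with ⟨hmin, hle⟩ | ⟨hmin, hle⟩
    · -- g (l ⊔ i) = α' (l ⊔ i) / (1+ε) ≥ α' l / (1+ε)
      have hgeq : g (l ⊔ i) = (min (α' (l ⊔ i)) (m + c (l ⊔ i))) / (1 + ε) := rfl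
      have hαl_ge : α' l / (1 + ε) ≤ α l := by
        rw [hαl, hgeq, hmin]
        exact hdiv (hmono hli)
      have : α j ≤ (m + c j) / (1 + ε) := le_trans (hα_le_g j) (hg_le2 j)
      have h3 : (m + c j) / (1 + ε) ≤ (α' l + c l + c j) / (1 + ε) := by
        apply hdiv
        have := hm_le l; linarith
      have h4 : (α' l + c l + c j) / (1 + ε) ≤ α' l / (1 + ε) + c l + c j := by
        rw [div_le_iff₀ hE, add_mul, add_mul, div_mul_cancel₀ _ (ne_of_gt hE)]
        nlinarith [hc l, hc j]
      linarith
    · -- g (l ⊔ i) = (m + c (l ⊔ i)) / (1+ε) ≥ m / (1+ε)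
      have hgeq : g (l ⊔ i) = (min (α' (l ⊔ i)) (m + c (l ⊔ i))) / (1 + ε) := rfl
      have hαl_ge : m / (1 + ε) ≤ α l := by
        rw [hαl, hgeq, hmin]
        apply hdiv
        have := hc (l ⊔ i); linarith
      have h5 : α j ≤ (m + c j) / (1 + ε) := le_trans (hα_le_g j) (hg_le2 j)
      have h6 : (m + c j) / (1 + ε) ≤ m / (1 + ε) + c j := by
        rw [div_le_iff₀ hE, add_mul, div_mul_cancel₀ _ (ne_of_gt hE)]
        nlinarith [hc j]
      have := hc l
      linarith
  -- constraint 2 for α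
  have hα_c2 : ∀ j, ∑ l ∈ Finset.univ.filter (fun l => j ≤ l),
      max (α j - c l) 0 ≤ f := by
    intro j
    have hstep : ∀ l, max (α j - c l) 0 ≤ max (α' j - (1 + ε) * c l) 0 / (1 + ε) := by
      intro l
      apply max_le
      · have h7 : α j ≤ α' j / (1 + ε) := le_trans (hα_le_g j) (hg_le1 j)
        have : α j - c l ≤ (α' j - (1 + ε) * c l) / (1 + ε) := by
          rw [sub_div]
          have heq : (1 + ε) * c l / (1 + ε) = c l := by
            field_simp
          rw [heq]
          linarith
        calc α j - c l ≤ (α' j - (1 + ε) * c l) / (1 + ε) := this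
          _ ≤ max (α' j - (1 + ε) * c l) 0 / (1 + ε) := hdiv (le_max_left _ _)
      · positivity
    calc ∑ l ∈ Finset.univ.filter (fun l => j ≤ l), max (α j - c l) 0
        ≤ ∑ l ∈ Finset.univ.filter (fun l => j ≤ l),
            max (α' j - (1 + ε) * c l) 0 / (1 + ε) :=
          Finset.sum_le_sum (fun l _ => hstep l)
      _ = (∑ l ∈ Finset.univ.filter (fun l => j ≤ l),
            max (α' j - (1 + ε) * c l) 0) / (1 + ε) := by rw [Finset.sum_div]
      _ ≤ ((1 + ε) * f) / (1 + ε) := hdiv (h2 j)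
      _ = f := by field_simp
  -- α is Jain-feasible
  have hfeas : JainFeasible c f α := ⟨hα_nonneg, hα_mono, hα_c1, hα_c2⟩
  have hratio := hJain α hfeas
  -- conclude
  have hsum : ∑ j, α' j ≤ (1 + ε) ^ 2 * ∑ j, α j := by
    rw [Finset.mul_sum]
    apply Finset.sum_le_sum
    intro j _
    have := hα_lb j
    rw [div_le_iff₀ (by positivity : (0:ℝ) < (1 + ε) ^ 2)] at this
    linarith [this]
  have hαsum : ∑ j, α j ≤ 1.861 * (f + ∑ j, c j) := by
    rw [div_le_iff₀ hden] at hratio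
    linarith
  rw [div_le_iff₀ hden]
  calc ∑ j, α' j ≤ (1 + ε) ^ 2 * ∑ j, α j := hsum
    _ ≤ (1 + ε) ^ 2 * (1.861 * (f + ∑ j, c j)) := by
        apply mul_le_mul_of_nonneg_left hαsum (by positivity)
    _ = (1 + ε) ^ 2 * 1.861 * (f + ∑ j, c j) := by ring
end
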